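/- arXiv:2202.04357 — 2 statements merged into one kernel-verified Lean document; each statement's English description precedes it below -/
import Mathlib

section
/- For a linear classifier w ≠ 0 and 2-norm cost, the strategic distance in the general-preference setting equals d_Δ(x,z;w) = |w̄^T x + 2z| where w̄ = w/‖w‖. That is, the minimal Euclidean distance from x to a point x' such that h(Δ(x,z)) ≠ h(Δ(x',z)) equals |w^T x/‖w‖ + 2z|. -/
open scoped RealInnerProductSpace

/-- For a linear classifier `w ≠ 0` and 2-norm cost in the
general-preference setting, the strategic distance equals `|⟪w,x⟫/‖w‖ + 2z|`:
the minimal distance from `x` to a point `x'` with `h(Δ(x,z)) ≠ h(Δ(x',z))`. -/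
theorem stmt5 {E : Type*} [NormedAddCommGroup E] [InnerProductSpace ℝ E]
    (w : E) (hw : w ≠ 0)
    (H : E → ℝ) (hH : ∀ x, H x = if 0 < ⟪w, x⟫ then 1 else -1)
    (Δ : E → ℝ → E) (z : ℝ) (hz : z = 1 ∨ z = -1)
    (hΔ : ∀ x, H (Δ x z) = z ↔ (H x = z ∨ |⟪w, x⟫| / ‖w‖ ≤ 2))
    (hΔ2 : ∀ x, ¬(H x = z ∨ |⟪w, x⟫| / ‖w‖ ≤ 2) → H (Δ x z) = H x)
    (x : E) :
    sInf {d : ℝ | ∃ x', d = ‖x - x'‖ ∧ H (Δ x z) ≠ H (Δ x' z)} =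
      |⟪w, x⟫ / ‖w‖ + 2 * z| := by
  have hnw : (0:ℝ) < ‖w‖ := norm_pos_iff.mpr hw
  have hz2 : z * z = 1 := by rcases hz with rfl | rfl <;> norm_num
  have hzabs : |z| = 1 := by rcases hz with rfl | rfl <;> norm_num
  set f : E → ℝ := fun y => z * (⟪w, y⟫ / ‖w‖ + 2 * z) with hf
  -- characterization of H (Δ y z) = z
  have L : ∀ y, H (Δ y z) = z ↔ 0 ≤ f y := by
    intro y
    rw [hΔ y]
    have habs : |⟪w, y⟫| / ‖w‖ = |⟪w, y⟫ / ‖w‖| := by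
      rw [abs_div, abs_of_pos hnw]
    rcases hz with rfl | rfl
    · simp only [hf]
      by_cases hp : 0 < ⟪w, y⟫
      · constructor
        · intro _; nlinarith [div_pos hp hnw]
        · intro _; left; rw [hH y, if_pos hp]
      · push_neg at hp
        have h1 : H y ≠ 1 := by rw [hH y, if_neg (not_lt.mpr hp)]; norm_num
        constructor
        · rintro (h | h)
          · exact absurd h h1
          · rw [habs, abs_le] at h; nlinarith [h.1]
        · intro h; right
          have h3 : ⟪w, y⟫ / ‖w‖ ≤ 0 := by rw [div_nonpos_iff]; exact Or.inr ⟨hp, hnw.le⟩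
          rw [habs, abs_le]; constructor <;> nlinarith
    · simp only [hf]
      by_cases hp : 0 < ⟪w, y⟫
      · have h1 : H y ≠ -1 := by rw [hH y, if_pos hp]; norm_num
        have h3 : 0 < ⟪w, y⟫ / ‖w‖ := div_pos hp hnw
        constructor
        · rintro (h | h)
          · exact absurd h h1
          · rw [habs, abs_le] at h; nlinarith [h.2]
        · intro h; right
          rw [habs, abs_le]; constructor <;> nlinarith
      · constructor
        · intro _
          have h3 : ⟪w, y⟫ / ‖w‖ ≤ 0 :=
            by rw [div_nonpos_iff]; exact Or.inr ⟨not_lt.mp hp, hnw.le⟩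
          nlinarith
        · intro _; left; rw [hH y, if_neg hp]
  -- H (Δ y z) is z or -z
  have M : ∀ y, H (Δ y z) = z ∨ H (Δ y z) = -z := by
    intro y
    by_cases h : H y = z ∨ |⟪w, y⟫| / ‖w‖ ≤ 2
    · left; exact (hΔ y).mpr h
    · right
      rw [hΔ2 y h]
      push_neg at h
      have h1 := h.1
      rcases hz with rfl | rfl <;> rw [hH y] at h1 ⊢ <;>
        split_ifs at h1 ⊢ <;> simp_all
  -- XOR characterization
  have N : ∀ y, (H (Δ x z) ≠ H (Δ y z)) ↔ ¬(0 ≤ f x ↔ 0 ≤ f y) := by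
    intro y
    have hne : z ≠ -z := by rcases hz with rfl | rfl <;> norm_num
    have hx := L x; have hy := L y
    rcases M x with h1 | h1 <;> rcases M y with h2 | h2 <;> rw [h1, h2]
    · have a := hx.mp h1; have b := hy.mp h2; simp [a, b]
    · have a := hx.mp h1
      have b : ¬ 0 ≤ f y := fun h => hne ((hy.mpr h).symm.trans h2)
      simp [a, b, hne]
    · have a : ¬ 0 ≤ f x := fun h => hne ((hx.mpr h).symm.trans h1)
      have b := hy.mp h2
      simp [a, b, Ne.symm hne]
    · have a : ¬ 0 ≤ f x := fun h => hne ((hx.mpr h).symm.trans h1)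
      have b : ¬ 0 ≤ f y := fun h => hne ((hy.mpr h).symm.trans h2)
      simp [a, b]
  -- Cauchy-Schwarz bound
  have CS : ∀ y, |f x - f y| ≤ ‖x - y‖ := by
    intro y
    have h1 : |⟪w, x - y⟫| ≤ ‖w‖ * ‖x - y‖ := abs_real_inner_le_norm w (x - y)
    have h2 : f x - f y = z * (⟪w, x - y⟫ / ‖w‖) := by
      simp only [hf, inner_sub_right]; ring
    rw [h2, abs_mul, hzabs, one_mul, abs_div, abs_of_pos hnw, div_le_iff₀ hnw]
    exact h1.trans_eq (mul_comm _ _)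
  -- construction of points at prescribed f value
  have C : ∀ v : ℝ, ∃ y, f y = v ∧ ‖x - y‖ = |v - f x| := by
    intro v
    refine ⟨x + ((z * (v - f x)) / ‖w‖) • w, ?_, ?_⟩
    · simp only [hf, inner_add_right, real_inner_smul_right,
        real_inner_self_eq_norm_sq]
      rcases hz with rfl | rfl <;> field_simp <;> ring
    · rw [show x - (x + ((z * (v - f x)) / ‖w‖) • w) = -(((z * (v - f x)) / ‖w‖) • w) by abel]
      rw [norm_neg, norm_smul, Real.norm_eq_abs, abs_div, abs_mul, hzabs,
        abs_of_pos hnw]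
      field_simp
  -- final
  have hgoal : |⟪w, x⟫ / ‖w‖ + 2 * z| = |f x| := by
    rw [hf, abs_mul, hzabs, one_mul]
  rw [hgoal]
  rcases le_or_gt 0 (f x) with ha | ha
  · have hmem : ∀ ε : ℝ, 0 < ε →
        ∃ d ∈ {d : ℝ | ∃ x', d = ‖x - x'‖ ∧ H (Δ x z) ≠ H (Δ x' z)},
          d = f x + ε := by
      intro ε hε
      obtain ⟨y, hy1, hy2⟩ := C (-ε)
      refine ⟨‖x - y‖, ⟨y, rfl, ?_⟩, ?_⟩
      · rw [N y]
        intro h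
        have := h.mp ha
        rw [hy1] at this; linarith
      · rw [hy2, abs_of_nonpos (by linarith)]; ring
    have hne : Set.Nonempty {d : ℝ | ∃ x', d = ‖x - x'‖ ∧ H (Δ x z) ≠ H (Δ x' z)} := by
      obtain ⟨d, hd, _⟩ := hmem 1 one_pos; exact ⟨d, hd⟩
    have hlb : ∀ d ∈ {d : ℝ | ∃ x', d = ‖x - x'‖ ∧ H (Δ x z) ≠ H (Δ x' z)},
        f x ≤ d := by
      rintro d ⟨y, rfl, hy⟩
      rw [N y] at hy
      have hfy : f y < 0 := by
        by_contra h
        push_neg at h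
        exact hy ⟨fun _ => h, fun _ => ha⟩
      calc f x ≤ f x - f y := by linarith
        _ ≤ |f x - f y| := le_abs_self _
        _ ≤ ‖x - y‖ := CS y
    have hbdd : BddBelow {d : ℝ | ∃ x', d = ‖x - x'‖ ∧ H (Δ x z) ≠ H (Δ x' z)} :=
      ⟨f x, hlb⟩
    rw [abs_of_nonneg ha]
    apply le_antisymm
    · rw [Real.sInf_le_iff hbdd hne]
      intro ε hε
      obtain ⟨d, hd, hde⟩ := hmem (ε / 2) (by linarith)
      exact ⟨d, hd, by rw [hde]; linarith⟩
    · exact le_csInf hne hlb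
  · obtain ⟨y, hy1, hy2⟩ := C 0
    have hmem : |f x| ∈ {d : ℝ | ∃ x', d = ‖x - x'‖ ∧ H (Δ x z) ≠ H (Δ x' z)} := by
      refine ⟨y, ?_, ?_⟩
      · rw [hy2, zero_sub, abs_neg]
      · rw [N y]
        intro h
        exact absurd (h.mpr (by rw [hy1])) (not_le.mpr ha)
    have hlb : ∀ d ∈ {d : ℝ | ∃ x', d = ‖x - x'‖ ∧ H (Δ x z) ≠ H (Δ x' z)},
        |f x| ≤ d := by
      rintro d ⟨y', rfl, hy'⟩
      rw [N y'] at hy'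
      have hfy : 0 ≤ f y' := by
        by_contra h
        push_neg at h
        exact hy' ⟨fun h' => absurd h' (not_le.mpr ha),
          fun h' => absurd h' (not_le.mpr h)⟩
      calc |f x| = -f x := abs_of_neg ha
        _ ≤ f y' - f x := by linarith
        _ ≤ |f x - f y'| := by rw [abs_sub_comm]; exact le_abs_self _
        _ ≤ ‖x - y'‖ := CS y'
    exact le_antisymm (csInf_le ⟨|f x|, hlb⟩ hmem) (le_csInf ⟨_, hmem⟩ hlb)
end

section
/- The hard strategic-SVM formulation 'minimize ‖w‖² subject to yᵢ(w^T xᵢ + 2ỹᵢ‖w‖) ≥ 1 for all i', followed by normalizing the minimizer w₀ to ŵ = w₀/‖w₀‖, outputs an optimal solution of the strategic max-margin problem max_{‖w‖=1} min_i yᵢ(w^T xᵢ + 2ỹᵢ), whenever the data is strategically separable (the max-margin problem has a solution with positive value). -/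
open scoped RealInnerProductSpace

/-- If the data is strategically separable (there is a unit-norm `w*`
with positive strategic margin `min_i yᵢ(⟪w*,xᵢ⟫ + 2tyᵢ)`), and `w₀` minimizes `‖w‖`
subject to `yᵢ(⟪w,xᵢ⟫ + 2tyᵢ‖w‖) ≥ 1` for all `i`, then `ŵ = w₀/‖w₀‖` is an optimal
solution of the strategic max-margin problem `max_{‖w‖=1} min_i yᵢ(⟪w,xᵢ⟫ + 2tyᵢ)`. -/
theorem stmt13 {E : Type*} [NormedAddCommGroup E] [InnerProductSpace ℝ E]
    (m : ℕ) (hne : (Finset.univ : Finset (Fin m)).Nonempty)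
    (x : Fin m → E) (ty y : Fin m → ℝ)
    (hty : ∀ i, ty i = 1 ∨ ty i = -1) (hy : ∀ i, y i = 1 ∨ y i = -1)
    (hsep : ∃ wstar : E, ‖wstar‖ = 1 ∧
      0 < Finset.univ.inf' hne (fun i => y i * (⟪wstar, x i⟫ + 2 * ty i)))
    (w₀ : E)
    (hfeas : ∀ i, 1 ≤ y i * (⟪w₀, x i⟫ + 2 * ty i * ‖w₀‖))
    (hmin : ∀ w' : E, (∀ i, 1 ≤ y i * (⟪w', x i⟫ + 2 * ty i * ‖w'‖)) →
      ‖w₀‖ ≤ ‖w'‖) :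
    ‖(‖w₀‖⁻¹ • w₀ : E)‖ = 1 ∧
    ∀ u : E, ‖u‖ = 1 →
      Finset.univ.inf' hne (fun i => y i * (⟪u, x i⟫ + 2 * ty i)) ≤
      Finset.univ.inf' hne (fun i => y i * (⟪‖w₀‖⁻¹ • w₀, x i⟫ + 2 * ty i)) := by

  obtain ⟨i₀, _⟩ := id hne
  have hw0 : w₀ ≠ 0 := by
    intro h
    have h1 := hfeas i₀
    simp [h] at h1
    linarith
  have hn : (0:ℝ) < ‖w₀‖ := norm_pos_iff.mpr hw0
  have hhat : ∀ i, ‖w₀‖⁻¹ ≤ y i * (⟪‖w₀‖⁻¹ • w₀, x i⟫ + 2 * ty i) := by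
    intro i
    have h := hfeas i
    have heq : y i * (⟪‖w₀‖⁻¹ • w₀, x i⟫ + 2 * ty i)
        = ‖w₀‖⁻¹ * (y i * (⟪w₀, x i⟫ + 2 * ty i * ‖w₀‖)) := by
      rw [real_inner_smul_left]; field_simp
    rw [heq]
    have h2 := mul_le_mul_of_nonneg_left h (inv_pos.mpr hn).le
    simpa using h2
  have hinfhat : ‖w₀‖⁻¹ ≤ Finset.univ.inf' hne (fun i => y i * (⟪‖w₀‖⁻¹ • w₀, x i⟫ + 2 * ty i)) :=
    Finset.le_inf' _ _ (fun i _ => hhat i)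
  constructor
  · rw [norm_smul, Real.norm_eq_abs, abs_of_pos (inv_pos.mpr hn), inv_mul_cancel₀ hn.ne']
  · intro u hu
    set γ := Finset.univ.inf' hne (fun i => y i * (⟪u, x i⟫ + 2 * ty i)) with hγ
    by_cases hγpos : 0 < γ
    · have hnorm : ‖γ⁻¹ • u‖ = γ⁻¹ := by
        rw [norm_smul, hu, mul_one, Real.norm_eq_abs, abs_of_pos (inv_pos.mpr hγpos)]
      have hfeas' : ∀ i, 1 ≤ y i * (⟪γ⁻¹ • u, x i⟫ + 2 * ty i * ‖γ⁻¹ • u‖) := by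
        intro i
        rw [hnorm, real_inner_smul_left]
        have hi : γ ≤ y i * (⟪u, x i⟫ + 2 * ty i) :=
          Finset.inf'_le _ (Finset.mem_univ i)
        have h3 : γ⁻¹ * γ ≤ γ⁻¹ * (y i * (⟪u, x i⟫ + 2 * ty i)) :=
          mul_le_mul_of_nonneg_left hi (inv_pos.mpr hγpos).le
        rw [inv_mul_cancel₀ hγpos.ne'] at h3
        calc (1:ℝ) ≤ γ⁻¹ * (y i * (⟪u, x i⟫ + 2 * ty i)) := h3
        _ = y i * (γ⁻¹ * ⟪u, x i⟫ + 2 * ty i * γ⁻¹) := by ring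
      have hle := hmin _ hfeas'
      rw [hnorm] at hle
      have hγle : γ ≤ ‖w₀‖⁻¹ := by
        have := mul_le_mul_of_nonneg_left hle hγpos.le
        rw [mul_inv_cancel₀ hγpos.ne'] at this
        rw [le_inv_comm₀ hγpos hn] at *
        nlinarith
      linarith
    · push_neg at hγpos
      have : (0:ℝ) < ‖w₀‖⁻¹ := inv_pos.mpr hn
      linarith
end
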